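/- Iterated integrals satisfy the path composition formula: if γ₁ and γ₂ are composable paths (the endpoint of γ₂ equals the initial point of γ₁), then ∫_{γ₁γ₂} ω₁⋯ω_n = ∑_{k=0}^n (∫_{γ₁} ω₁⋯ω_k)·(∫_{γ₂} ω_{k+1}⋯ω_n), where the iterated integral of the empty word is 1. -/

import Mathlib

/-!
Induction on the word. Splitting the outermost integral of `ω₁ ⋯ ω_n` at the junction point `b`
gives the `k = 0` term (the whole word integrated over `γ₂`) plus an integral over `γ₁` whose
integrand, by induction, is `ω₁` times the composition formula for `ω₂ ⋯ ω_n`; integrating that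
term by term produces the remaining terms `k ≥ 1`.
-/

open Finset intervalIntegral

/-- The iterated integral of a word of one-forms along a path, written in terms of
the pullback functions: the head of the list is the outermost (latest) integrand,
so that in the word `ω₁ ⋯ ω_n` the letter `ω₁` is integrated last. -/
noncomputable def iterInt (a : ℝ) : List (ℝ → ℂ) → ℝ → ℂ
  | [], _ => 1
  | f :: fs, b => ∫ s in a..b, f s * iterInt a fs s

theorem continuous_iterInt (a : ℝ) {ws : List (ℝ → ℂ)} (hw : ∀ f ∈ ws, Continuous f) :
    Continuous (iterInt a ws) := by
  induction ws with
  | nil => exact continuous_const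
  | cons f fs ih =>
    have hint : Continuous fun s => f s * iterInt a fs s :=
      (hw f List.mem_cons_self).mul (ih fun g hg => hw g (List.mem_cons_of_mem f hg))
    exact continuous_primitive (fun x y => hint.intervalIntegrable x y) a

theorem iterInt_cons_eq_add_integral (a b c : ℝ) {f : ℝ → ℂ} {fs : List (ℝ → ℂ)}
    (hf : Continuous f) (hfs : ∀ g ∈ fs, Continuous g) :
    iterInt a (f :: fs) c = iterInt a (f :: fs) b + ∫ s in b..c, f s * iterInt a fs s := by
  have hint : Continuous fun s => f s * iterInt a fs s := hf.mul (continuous_iterInt a hfs)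
  exact (integral_add_adjacent_intervals (hint.intervalIntegrable a b)
    (hint.intervalIntegrable b c)).symm

theorem integral_mul_sum_iterInt {ι : Type*} (b c : ℝ) {f : ℝ → ℂ} (hf : Continuous f)
    (t : Finset ι) {words : ι → List (ℝ → ℂ)} (hwords : ∀ k, ∀ g ∈ words k, Continuous g)
    (x : ι → ℂ) :
    ∫ s in b..c, f s * ∑ k ∈ t, iterInt b (words k) s * x k
      = ∑ k ∈ t, iterInt b (f :: words k) c * x k := by
  simp_rw [mul_sum, ← mul_assoc]
  rw [integral_finsetSum]
  · simp only [iterInt, integral_mul_const]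
  · exact fun k _ =>
      ((hf.mul (continuous_iterInt b (hwords k))).mul continuous_const).intervalIntegrable b c

/-- Path composition formula for iterated integrals: for the composite path
`γ₁γ₂` (first traverse `γ₂`, over `[a,b]`, then `γ₁`, over `[b,c]`),
`∫_{γ₁γ₂} ω₁⋯ω_n = ∑_{k=0}^n (∫_{γ₁} ω₁⋯ω_k) (∫_{γ₂} ω_{k+1}⋯ω_n)`,
with the iterated integral of the empty word equal to `1`. -/
theorem iterInt_path_composition (a b c : ℝ) (ws : List (ℝ → ℂ))
    (hw : ∀ f ∈ ws, Continuous f) :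
    iterInt a ws c
      = ∑ k ∈ Finset.range (ws.length + 1),
          iterInt b (ws.take k) c * iterInt a (ws.drop k) b := by
  induction ws generalizing c with
  | nil => simp [iterInt]
  | cons f fs ih =>
    have hf : Continuous f := hw f List.mem_cons_self
    have hfs : ∀ g ∈ fs, Continuous g := fun g hg => hw g (List.mem_cons_of_mem f hg)
    calc iterInt a (f :: fs) c
        = iterInt a (f :: fs) b + ∫ s in b..c, f s * iterInt a fs s :=
          iterInt_cons_eq_add_integral a b c hf hfs
      _ = iterInt a (f :: fs) b + ∫ s in b..c, f s * ∑ k ∈ range (fs.length + 1),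
            iterInt b (fs.take k) s * iterInt a (fs.drop k) b := by
          simp_rw [← ih _ hfs]
      _ = iterInt a (f :: fs) b + ∑ k ∈ range (fs.length + 1),
            iterInt b (f :: fs.take k) c * iterInt a (fs.drop k) b := by
          rw [integral_mul_sum_iterInt b c hf _
            (fun k g hg => hfs g (List.mem_of_mem_take hg))]
      _ = _ := by
          rw [List.length_cons, sum_range_succ' _ (fs.length + 1), add_comm]
          simp only [List.take_succ_cons, List.drop_succ_cons, List.take_zero, List.drop_zero]
          rw [iterInt, one_mul]
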